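/- For M ∈ SL₂(ℤ≥0) with M ≠ identity, the Möbius transformation z ↦ (az+b)/(cz+d) associated to M = [[a,b],[c,d]] maps the open interval (0, ∞) of positive reals into itself, and distinct matrices in SL₂(ℤ≥0) give Möbius transformations taking distinct values at 1. -/
import Mathlib


open Matrix

def SL2N (M : Matrix (Fin 2) (Fin 2) ℤ) : Prop :=
  (∀ i j, 0 ≤ M i j) ∧ M.det = 1

def Lmat : Matrix (Fin 2) (Fin 2) ℤ := !![1, 0; 1, 1]

def Rmat : Matrix (Fin 2) (Fin 2) ℤ := !![1, 1; 0, 1]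

def matOf (w : List Bool) : Matrix (Fin 2) (Fin 2) ℤ :=
  w.foldl (fun acc b => (if b then Rmat else Lmat) * acc) 1

noncomputable def mob (M : Matrix (Fin 2) (Fin 2) ℤ) (z : ℝ) : ℝ :=
  ((M 0 0 : ℝ) * z + (M 0 1 : ℝ)) / ((M 1 0 : ℝ) * z + (M 1 1 : ℝ))


lemma posdiag {a b c d : ℤ} (hb : 0 ≤ b) (hc : 0 ≤ c) (hd : 0 ≤ d)
    (hdet : a * d - b * c = 1) : 1 ≤ a ∧ 1 ≤ d := by
  constructor
  · by_contra h
    have ha' : a ≤ 0 := by omega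
    have : a * d ≤ 0 := mul_nonpos_of_nonpos_of_nonneg ha' hd
    nlinarith [mul_nonneg hb hc]
  · by_contra h
    have hd' : d ≤ 0 := by omega
    have : a * d ≤ 0 := by
      rcases le_or_gt a 0 with h1 | h1
      · nlinarith
      · exact mul_nonpos_of_nonneg_of_nonpos (le_of_lt h1) hd'
    nlinarith [mul_nonneg hb hc]

lemma eqone {a b c d : ℤ} (ha : 0 ≤ a) (hb : 0 ≤ b) (hc : 0 ≤ c) (hd : 0 ≤ d)
    (hdet : a * d - b * c = 1) (hs : a + b = c + d) :
    a = 1 ∧ b = 0 ∧ c = 0 ∧ d = 1 := by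
  obtain ⟨ha1, hd1⟩ := posdiag hb hc hd hdet
  have key : (a + b) * (d - b) = 1 := by nlinarith
  have h1 : a + b = 1 ∧ d - b = 1 := by
    rcases Int.mul_eq_one_iff_eq_one_or_neg_one.mp key with ⟨h1, h2⟩ | ⟨h1, h2⟩
    · exact ⟨h1, h2⟩
    · omega
  omega

lemma dichot {a b c d : ℤ} (ha : 0 ≤ a) (hb : 0 ≤ b) (hc : 0 ≤ c) (hd : 0 ≤ d)
    (hdet : a * d - b * c = 1) (hne : a + b ≠ c + d) :
    (c ≤ a ∧ d ≤ b) ∨ (a ≤ c ∧ b ≤ d) := by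
  obtain ⟨ha1, hd1⟩ := posdiag hb hc hd hdet
  rcases le_or_gt c a with h1 | h1 <;> rcases le_or_gt d b with h2 | h2
  · exact Or.inl ⟨h1, h2⟩
  · rcases eq_or_lt_of_le h1 with h3 | h3
    · exact Or.inr ⟨le_of_eq h3.symm, le_of_lt h2⟩
    · exfalso
      have hbc : b * c ≤ (d - 1) * (a - 1) :=
        mul_le_mul (by omega) (by omega) hc (by omega)
      have had : a + d ≤ 2 := by nlinarith
      omega
  · rcases eq_or_lt_of_le h2 with h3 | h3
    · exact Or.inr ⟨by omega, by omega⟩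
    · exfalso
      have had : a * d ≤ (c - 1) * (b - 1) :=
        mul_le_mul (by omega) (by omega) hd (by omega)
      nlinarith
  · exact Or.inr ⟨le_of_lt h1, le_of_lt h2⟩

lemma core : ∀ n : ℕ, ∀ a b c d a' b' c' d' : ℤ,
    0 ≤ a → 0 ≤ b → 0 ≤ c → 0 ≤ d →
    0 ≤ a' → 0 ≤ b' → 0 ≤ c' → 0 ≤ d' →
    a * d - b * c = 1 → a' * d' - b' * c' = 1 →
    (a + b) * (c' + d') = (a' + b') * (c + d) →
    a + b + c + d + a' + b' + c' + d' ≤ (n : ℤ) →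
    a = a' ∧ b = b' ∧ c = c' ∧ d = d' := by
  intro n
  induction n with
  | zero =>
    intro a b c d a' b' c' d' ha hb hc hd ha' hb' hc' hd' hdet hdet' hcross hn
    obtain ⟨h1, h2⟩ := posdiag hb hc hd hdet
    obtain ⟨h1', h2'⟩ := posdiag hb' hc' hd' hdet'
    exfalso; push_cast at hn; omega
  | succ n ih =>
    intro a b c d a' b' c' d' ha hb hc hd ha' hb' hc' hd' hdet hdet' hcross hn
    obtain ⟨ha1, hd1⟩ := posdiag hb hc hd hdet
    obtain ⟨ha1', hd1'⟩ := posdiag hb' hc' hd' hdet'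
    have hs : 1 ≤ a + b := by omega
    have ht : 1 ≤ c + d := by omega
    have hs' : 1 ≤ a' + b' := by omega
    have ht' : 1 ≤ c' + d' := by omega
    by_cases h1 : a + b = c + d
    · have h2 : a' + b' = c' + d' := by
        have h3 : (a + b) * (c' + d') = (a + b) * (a' + b') := by
          rw [hcross, h1]; ring
        have := mul_left_cancel₀ (by omega : (a + b) ≠ 0) h3
        omega
      obtain ⟨e1, e2, e3, e4⟩ := eqone ha hb hc hd hdet h1
      obtain ⟨f1, f2, f3, f4⟩ := eqone ha' hb' hc' hd' hdet' h2
      omega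
    · by_cases h2 : a' + b' = c' + d'
      · exfalso
        have h3 : (c' + d') * (a + b) = (c' + d') * (c + d) := by
          linear_combination hcross + (c + d) * h2
        have := mul_left_cancel₀ (by omega : (c' + d') ≠ 0) h3
        omega
      · rcases dichot ha hb hc hd hdet h1 with ⟨hR1, hR2⟩ | ⟨hL1, hL2⟩ <;>
          rcases dichot ha' hb' hc' hd' hdet' h2 with ⟨g1, g2⟩ | ⟨g1, g2⟩
        · -- both R
          have ih' := ih (a - c) (b - d) c d (a' - c') (b' - d') c' d'
            (by omega) (by omega) hc hd (by omega) (by omega) hc' hd'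
            (by ring_nf; linarith [hdet]) (by ring_nf; linarith [hdet'])
            (by linear_combination hcross)
            (by push_cast at hn ⊢; omega)
          omega
        · -- M R, N L : contradiction
          exfalso
          have hst : c + d < a + b := by omega
          have hst' : a' + b' < c' + d' := by omega
          have e1 : (c + d) * (c' + d') < (a + b) * (c' + d') :=
            mul_lt_mul_of_pos_right hst (by omega)
          have e2 : (a' + b') * (c + d) < (c' + d') * (c + d) :=
            mul_lt_mul_of_pos_right hst' (by omega)
          nlinarith
        · -- M L, N R : contradiction
          exfalso
          have hst : a + b < c + d := by omega
          have hst' : c' + d' < a' + b' := by omega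
          have e1 : (a + b) * (c' + d') < (c + d) * (c' + d') :=
            mul_lt_mul_of_pos_right hst (by omega)
          have e2 : (c' + d') * (c + d) < (a' + b') * (c + d) :=
            mul_lt_mul_of_pos_right hst' (by omega)
          nlinarith
        · -- both L
          have ih' := ih a b (c - a) (d - b) a' b' (c' - a') (d' - b')
            ha hb (by omega) (by omega) ha' hb' (by omega) (by omega)
            (by ring_nf; linarith [hdet]) (by ring_nf; linarith [hdet'])
            (by linear_combination hcross)
            (by push_cast at hn ⊢; omega)
          omega

theorem stmt6 :
    (∀ M, SL2N M → M ≠ 1 → ∀ z : ℝ, 0 < z → 0 < mob M z) ∧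
    (∀ M N, SL2N M → SL2N N → mob M 1 = mob N 1 → M = N) := by
  constructor
  · intro M hM _ z hz
    obtain ⟨hnn, hdet⟩ := hM
    rw [Matrix.det_fin_two] at hdet
    obtain ⟨ha1, hd1⟩ := posdiag (hnn 0 1) (hnn 1 0) (hnn 1 1) hdet
    unfold mob
    apply div_pos
    · have h1 : (1:ℝ) ≤ (M 0 0 : ℝ) := by exact_mod_cast ha1
      have h2 : (0:ℝ) ≤ (M 0 1 : ℝ) := by exact_mod_cast hnn 0 1
      nlinarith
    · have h1 : (1:ℝ) ≤ (M 1 1 : ℝ) := by exact_mod_cast hd1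
      have h2 : (0:ℝ) ≤ (M 1 0 : ℝ) := by exact_mod_cast hnn 1 0
      nlinarith
  · intro M N hM hN hmob
    obtain ⟨hnn, hdet⟩ := hM
    rw [Matrix.det_fin_two] at hdet
    obtain ⟨hnn', hdet'⟩ := hN
    rw [Matrix.det_fin_two] at hdet'
    obtain ⟨ha1, hd1⟩ := posdiag (hnn 0 1) (hnn 1 0) (hnn 1 1) hdet
    obtain ⟨ha1', hd1'⟩ := posdiag (hnn' 0 1) (hnn' 1 0) (hnn' 1 1) hdet'
    have hden : (0:ℝ) < (M 1 0 : ℝ) * 1 + (M 1 1 : ℝ) := by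
      have h1 : (0:ℝ) ≤ (M 1 0:ℝ) := by exact_mod_cast hnn 1 0
      have h2 : (1:ℝ) ≤ (M 1 1:ℝ) := by exact_mod_cast hd1
      linarith
    have hden' : (0:ℝ) < (N 1 0 : ℝ) * 1 + (N 1 1 : ℝ) := by
      have h1 : (0:ℝ) ≤ (N 1 0:ℝ) := by exact_mod_cast hnn' 1 0
      have h2 : (1:ℝ) ≤ (N 1 1:ℝ) := by exact_mod_cast hd1'
      linarith
    unfold mob at hmob
    rw [div_eq_div_iff (ne_of_gt hden) (ne_of_gt hden')] at hmob
    simp only [mul_one] at hmob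
    have hcross : (M 0 0 + M 0 1) * (N 1 0 + N 1 1) =
        (N 0 0 + N 0 1) * (M 1 0 + M 1 1) := by exact_mod_cast hmob
    set S : ℤ := M 0 0 + M 0 1 + M 1 0 + M 1 1 + N 0 0 + N 0 1 + N 1 0 + N 1 1 with hS
    have hkey := core S.toNat (M 0 0) (M 0 1) (M 1 0) (M 1 1)
      (N 0 0) (N 0 1) (N 1 0) (N 1 1)
      (hnn 0 0) (hnn 0 1) (hnn 1 0) (hnn 1 1)
      (hnn' 0 0) (hnn' 0 1) (hnn' 1 0) (hnn' 1 1)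
      hdet hdet' hcross (by rw [hS] at *; exact_mod_cast Int.self_le_toNat S)
    obtain ⟨e1, e2, e3, e4⟩ := hkey
    rw [Matrix.eta_fin_two M, Matrix.eta_fin_two N, e1, e2, e3, e4]
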